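/- arXiv:2101.09740 — 3 statements merged into one kernel-verified Lean document; each statement's English description precedes it below -/
import Mathlib

section
/- The function y ↦ (L/2)‖y‖² − V_𝒯(y) is convex on ℝ^d. -/
/-!
Write `v_𝒯(y, α) = (L/2)‖y‖² + ψ(y, α)`. Both `Σ αᵢ (gᵢ - μ xᵢ)` and the last sum in `v_𝒯` are
linear in `α`, so `ψ(y, α) = -((L-μ)/2)‖y - (1/(L-μ)) Σ αᵢ (gᵢ - μ xᵢ)‖² + ℓ(α)` is a concave
quadratic of a linear function of `(y, α)` plus a linear one, hence jointly concave. Maximising a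
jointly concave function over the convex set `Δ_I` in one variable leaves a concave function of
the other, so `V_𝒯 - (L/2)‖·‖² = max_α ψ(·, α)` is concave.
-/

open Set

/-- The auxiliary quadratic function `v_T(y, α)` from the strongly-convex extension
construction. -/
noncomputable def vT {d : ℕ} {I : Type*} [Fintype I] (L μ : ℝ)
    (x g : I → EuclideanSpace ℝ (Fin d)) (f : I → ℝ)
    (y : EuclideanSpace ℝ (Fin d)) (α : I → ℝ) : ℝ :=
  L / 2 * ‖y‖ ^ 2
    - (L - μ) / 2 * ‖y - (1 / (L - μ)) • ∑ i, α i • (g i - μ • x i)‖ ^ 2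
    + ∑ i, α i * (f i + 1 / (2 * (L - μ)) * ‖g i - L • x i‖ ^ 2 - L / 2 * ‖x i‖ ^ 2)

/-- The strongly-convex extension `V_T(y) = max_{α ∈ Δ_I} v_T(y, α)`. -/
noncomputable def VT {d : ℕ} {I : Type*} [Fintype I] (L μ : ℝ)
    (x g : I → EuclideanSpace ℝ (Fin d)) (f : I → ℝ)
    (y : EuclideanSpace ℝ (Fin d)) : ℝ :=
  sSup (vT L μ x g f y '' stdSimplex ℝ I)

theorem ConcaveOn.sSup_image {E F : Type*} [AddCommGroup E] [Module ℝ E] [AddCommGroup F]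
    [Module ℝ F] {φ : E → F → ℝ} {s : Set E} {K : Set F} (hK : K.Nonempty)
    (hbdd : ∀ y ∈ s, BddAbove (φ y '' K)) (hφ : ConcaveOn ℝ (s ×ˢ K) fun p => φ p.1 p.2) :
    ConcaveOn ℝ s fun y => sSup (φ y '' K) := by
  refine ⟨by simpa [fst_image_prod _ hK] using hφ.1.linear_image (LinearMap.fst ℝ E F), ?_⟩
  intro y₁ hy₁ y₂ hy₂ a b ha hb hab
  rw [← Real.sSup_smul_of_nonneg ha,
    ← Real.sSup_smul_of_nonneg hb, ← csSup_add ((hK.image _).smul_set)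
      ((hbdd y₁ hy₁).smul_of_nonneg ha) ((hK.image _).smul_set) ((hbdd y₂ hy₂).smul_of_nonneg hb)]
  refine csSup_le (((hK.image _).smul_set).add ((hK.image _).smul_set)) ?_
  rintro _ ⟨_, ⟨_, ⟨α₁, hα₁, rfl⟩, rfl⟩, _, ⟨_, ⟨α₂, hα₂, rfl⟩, rfl⟩, rfl⟩
  have hmix : (a • y₁ + b • y₂, a • α₁ + b • α₂) ∈ s ×ˢ K :=
    hφ.1 (mk_mem_prod hy₁ hα₁) (mk_mem_prod hy₂ hα₂) ha hb hab
  calc a • φ y₁ α₁ + b • φ y₂ α₂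
      ≤ φ (a • y₁ + b • y₂) (a • α₁ + b • α₂) :=
        hφ.2 (mk_mem_prod hy₁ hα₁) (mk_mem_prod hy₂ hα₂) ha hb hab
    _ ≤ sSup (φ (a • y₁ + b • y₂) '' K) :=
        le_csSup (hbdd _ hmix.1) (mem_image_of_mem _ hmix.2)

section StronglyConvexExtension

variable {d : ℕ} {I : Type*} [Fintype I] {L μ : ℝ}
  (x g : I → EuclideanSpace ℝ (Fin d)) (f : I → ℝ)

theorem concaveOn_vT_sub_sq_norm (hμL : μ < L) :
    ConcaveOn ℝ univ fun p : EuclideanSpace ℝ (Fin d) × (I → ℝ) =>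
      vT L μ x g f p.1 p.2 - L / 2 * ‖p.1‖ ^ 2 := by
  set c : I → ℝ := fun i =>
    f i + 1 / (2 * (L - μ)) * ‖g i - L • x i‖ ^ 2 - L / 2 * ‖x i‖ ^ 2
  set T := LinearMap.fst ℝ _ _ - (1 / (L - μ)) •
    (Fintype.linearCombination ℝ fun i => g i - μ • x i) ∘ₗ LinearMap.snd ℝ _ (I → ℝ)
  set ℓ := Fintype.linearCombination ℝ c ∘ₗ LinearMap.snd ℝ (EuclideanSpace ℝ (Fin d)) (I → ℝ)
  have hquad : ConvexOn ℝ univ fun p => (L - μ) / 2 * ‖T p‖ ^ 2 :=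
    ((convexOn_univ_norm.pow (fun _ _ => norm_nonneg _) 2).comp_linearMap T).smul
      (by linarith)
  refine ((ℓ.concaveOn convex_univ).sub hquad).congr fun p _ => ?_
  simp only [vT, T, ℓ, LinearMap.sub_apply, LinearMap.smul_apply, LinearMap.comp_apply,
    LinearMap.fst_apply, LinearMap.snd_apply, Fintype.linearCombination_apply, smul_eq_mul,
    Pi.sub_apply, c]
  ring

theorem continuous_vT (y : EuclideanSpace ℝ (Fin d)) : Continuous (vT L μ x g f y) := by
  unfold vT
  fun_prop

theorem bddAbove_vT_sub_image (y : EuclideanSpace ℝ (Fin d)) (q : ℝ) :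
    BddAbove ((fun α => vT L μ x g f y α - q) '' stdSimplex ℝ I) :=
  ((isCompact_stdSimplex ℝ I).image ((continuous_vT x g f y).sub continuous_const)).bddAbove

theorem VT_eq_add_sSup [Nonempty I] (y : EuclideanSpace ℝ (Fin d)) (q : ℝ) :
    VT L μ x g f y = q + sSup ((fun α => vT L μ x g f y α - q) '' stdSimplex ℝ I) := by
  have hadd := csSup_add (singleton_nonempty q) bddAbove_singleton
    ((isPathConnected_stdSimplex I).nonempty.image fun α => vT L μ x g f y α - q)
    (bddAbove_vT_sub_image x g f y q)
  rw [csSup_singleton, singleton_add, image_image] at hadd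
  simp only [VT, ← hadd, add_sub_cancel]

end StronglyConvexExtension

theorem stmt2_general {d : ℕ} {I : Type*} [Fintype I] [Nonempty I]
    {L μ : ℝ} (hμL : μ < L)
    (x g : I → EuclideanSpace ℝ (Fin d)) (f : I → ℝ) :
    ConvexOn ℝ Set.univ (fun y : EuclideanSpace ℝ (Fin d) =>
      L / 2 * ‖y‖ ^ 2 - VT L μ x g f y) := by
  have hconc := ConcaveOn.sSup_image (isPathConnected_stdSimplex I).nonempty
    (fun y _ => bddAbove_vT_sub_image x g f y (L / 2 * ‖y‖ ^ 2))
    ((concaveOn_vT_sub_sq_norm x g f hμL).subset (subset_univ _)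
      (convex_univ.prod (convex_stdSimplex ℝ I)))
  refine hconc.neg.congr fun y _ => ?_
  simp only [Pi.neg_apply, VT_eq_add_sSup x g f y (L / 2 * ‖y‖ ^ 2)]
  ring

/-- `(L/2)‖·‖² − V_T(·)` is convex on all of `ℝ^d`, i.e. `V_T` is `L`-smooth from above. -/
theorem stmt2 {d : ℕ} {I : Type*} [Fintype I] [Nonempty I]
    {L μ : ℝ} (hL : 0 < L) (hμL : μ < L)
    (x g : I → EuclideanSpace ℝ (Fin d)) (f : I → ℝ) :
    ConvexOn ℝ Set.univ (fun y : EuclideanSpace ℝ (Fin d) =>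
      L / 2 * ‖y‖ ^ 2 - VT L μ x g f y) :=
  stmt2_general hμL x g f
end

section
/- Let i ∈ I and suppose that for every j ∈ I the strongly convex interpolation condition holds: (1/(2L))‖g_i − g_j‖² + (μL/(2(L−μ)))‖x_i − x_j − (1/L)(g_i − g_j)‖² ≤ f_i − f_j − ⟨g_j, x_i − x_j⟩. Then V_𝒯(x_i) = f_i and V_𝒯 is differentiable at x_i with gradient ∇V_𝒯(x_i) = g_i. -/
/-!
Taking for `α` the vertex `e_i` of the simplex gives the lower bound
`V_𝒯(y) ≥ f_i + ⟪g_i, y - x_i⟫ + μ/2 ‖y - x_i‖²`. For the upper bound, Young's inequality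
replaces the concave term `-(L-μ)/2 ‖y - c‖²` by a function affine in `c`, hence in `α`; each
vertex coefficient is then controlled by one interpolation condition, which yields
`V_𝒯(y) ≤ f_i + ⟪g_i, y - x_i⟫ + L/2 ‖y - x_i‖²`. A function squeezed between two quadratics
with the same value and slope at `x_i` takes that value and has that gradient there.
-/

open scoped RealInnerProductSpace BigOperators

section InnerProductSpace

variable {E : Type*} [NormedAddCommGroup E] [InnerProductSpace ℝ E]

lemma neg_mul_norm_sq_le_inner_add {t : ℝ} (ht : 0 < t) (a u : E) :
    -(t / 2) * ‖u‖ ^ 2 ≤ ⟪a, u⟫ + ‖a‖ ^ 2 / (2 * t) := by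
  have hsq : 0 ≤ ‖t • u + a‖ ^ 2 / (2 * t) := by positivity
  rw [norm_add_sq_real, norm_smul, real_inner_smul_left, Real.norm_eq_abs, abs_of_pos ht,
    real_inner_comm] at hsq
  have key : (t ^ 2 * ‖u‖ ^ 2 + 2 * (t * ⟪a, u⟫) + ‖a‖ ^ 2) / (2 * t)
      = t / 2 * ‖u‖ ^ 2 + ⟪a, u⟫ + ‖a‖ ^ 2 / (2 * t) := by
    field_simp
  rw [mul_pow, key] at hsq
  linarith

lemma hasGradientAt_of_quadratic_sandwich [CompleteSpace E] {φ : E → ℝ} {x₀ g : E} {c a b : ℝ}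
    (hlo : ∀ y, c + ⟪g, y - x₀⟫ + a * ‖y - x₀‖ ^ 2 ≤ φ y)
    (hhi : ∀ y, φ y ≤ c + ⟪g, y - x₀⟫ + b * ‖y - x₀‖ ^ 2) :
    φ x₀ = c ∧ HasGradientAt φ g x₀ := by
  have hval : φ x₀ = c := by
    have hlo₀ := hlo x₀
    have hhi₀ := hhi x₀
    simp only [sub_self, inner_zero_right, norm_zero] at hlo₀ hhi₀
    linarith
  refine ⟨hval, ?_⟩
  rw [hasGradientAt_iff_isLittleO, hval]
  refine Asymptotics.IsBigO.trans_isLittleO (.of_bound (max |a| |b|) (.of_forall fun y => ?_))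
    (Asymptotics.isLittleO_pow_sub_sub x₀ one_lt_two)
  have hn : 0 ≤ ‖y - x₀‖ ^ 2 := by positivity
  rw [Real.norm_eq_abs, Real.norm_eq_abs, abs_of_nonneg hn, abs_le]
  constructor <;> nlinarith [hlo y, hhi y, le_max_left |a| |b|, le_max_right |a| |b|,
    neg_abs_le a, le_abs_self b]

/-- When `μ < L`, the right side minus the left side is the minimum over `y` of
`(fi + ⟪gi, y - xi⟫ + L/2 ‖y - xi‖²) - (fj + ⟪gj, y - xj⟫ + μ/2 ‖y - xj‖²)`. -/
lemma vertex_bound_of_interpolation {L μ : ℝ} (hL : L ≠ 0) (hμL : μ ≠ L) {xi xj gi gj : E}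
    {fi fj : ℝ}
    (h : 1 / (2 * L) * ‖gi - gj‖ ^ 2
        + μ * L / (2 * (L - μ)) * ‖xi - xj - (1 / L) • (gi - gj)‖ ^ 2
      ≤ fi - fj - ⟪gj, xi - xj⟫) :
    fj + 1 / (2 * (L - μ)) * ‖gj - L • xj‖ ^ 2 - L / 2 * ‖xj‖ ^ 2
        - 1 / (L - μ) * ⟪gi - L • xi, gj - μ • xj⟫ + ‖gi - L • xi‖ ^ 2 / (2 * (L - μ))
      ≤ fi - ⟪gi, xi⟫ + L / 2 * ‖xi‖ ^ 2 := by
  have hLμ : L - μ ≠ 0 := sub_ne_zero.2 hμL.symm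
  have slack : (fi - ⟪gi, xi⟫ + L / 2 * ‖xi‖ ^ 2)
      - (fj + 1 / (2 * (L - μ)) * ‖gj - L • xj‖ ^ 2 - L / 2 * ‖xj‖ ^ 2
        - 1 / (L - μ) * ⟪gi - L • xi, gj - μ • xj⟫ + ‖gi - L • xi‖ ^ 2 / (2 * (L - μ)))
      = (fi - fj - ⟪gj, xi - xj⟫)
        - (1 / (2 * L) * ‖gi - gj‖ ^ 2
          + μ * L / (2 * (L - μ)) * ‖xi - xj - (1 / L) • (gi - gj)‖ ^ 2) := by
    simp only [norm_sub_sq_real, inner_sub_left, inner_sub_right, real_inner_smul_left,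
      real_inner_smul_right, norm_smul, mul_pow, sq_abs, Real.norm_eq_abs]
    simp only [real_inner_comm gi xi, real_inner_comm gi xj, real_inner_comm gj xi,
      real_inner_comm gj xj, real_inner_comm gj gi, real_inner_comm xj xi]
    field_simp
    ring
  linarith

end InnerProductSpace

lemma sum_mul_le_of_mem_stdSimplex {I : Type*} [Fintype I] {α u : I → ℝ} {K : ℝ}
    (hα : α ∈ stdSimplex ℝ I) (hu : ∀ j, u j ≤ K) : ∑ j, α j * u j ≤ K :=
  calc ∑ j, α j * u j ≤ ∑ j, α j * K :=
        Finset.sum_le_sum fun j _ => mul_le_mul_of_nonneg_left (hu j) (hα.1 j)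
    _ = K := by rw [← Finset.sum_mul, hα.2, one_mul]

section Extension

variable {d : ℕ} {I : Type*} [Fintype I] {L μ : ℝ} {x g : I → EuclideanSpace ℝ (Fin d)}
  {f : I → ℝ}

lemma vT_single [DecidableEq I] (hμL : μ ≠ L) (i : I) (y : EuclideanSpace ℝ (Fin d)) :
    vT L μ x g f y (Pi.single i 1) = f i + ⟪g i, y - x i⟫ + μ / 2 * ‖y - x i‖ ^ 2 := by
  have hLμ : L - μ ≠ 0 := sub_ne_zero.2 hμL.symm
  simp only [vT, Pi.single_apply, ite_smul, ite_mul, one_smul, zero_smul, one_mul, zero_mul,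
    Finset.sum_ite_eq', Finset.mem_univ, if_true]
  simp only [norm_sub_sq_real, inner_sub_right, real_inner_smul_right, norm_smul, mul_pow,
    sq_abs, Real.norm_eq_abs]
  simp only [real_inner_comm (g i) y, real_inner_comm (x i) y, real_inner_comm (x i) (g i)]
  field_simp
  ring

lemma vT_le_of_interpolation (hL : L ≠ 0) (hμL : μ < L) {i : I}
    (hinterp : ∀ j : I,
      1 / (2 * L) * ‖g i - g j‖ ^ 2
          + μ * L / (2 * (L - μ)) * ‖x i - x j - (1 / L) • (g i - g j)‖ ^ 2
        ≤ f i - f j - ⟪g j, x i - x j⟫)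
    (y : EuclideanSpace ℝ (Fin d)) {α : I → ℝ} (hα : α ∈ stdSimplex ℝ I) :
    vT L μ x g f y α ≤ f i + ⟪g i, y - x i⟫ + L / 2 * ‖y - x i‖ ^ 2 := by
  set t := L - μ
  set a := g i - L • x i
  set c := (1 / t) • ∑ j, α j • (g j - μ • x j)
  set β := fun j => f j + 1 / (2 * t) * ‖g j - L • x j‖ ^ 2 - L / 2 * ‖x j‖ ^ 2
  have young := neg_mul_norm_sq_le_inner_add (sub_pos.2 hμL) a (y - c)
  have hvertex : ∑ j, α j * (β j - 1 / t * ⟪a, g j - μ • x j⟫ + ‖a‖ ^ 2 / (2 * t))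
      ≤ f i - ⟪g i, x i⟫ + L / 2 * ‖x i‖ ^ 2 :=
    sum_mul_le_of_mem_stdSimplex hα fun j =>
      vertex_bound_of_interpolation hL hμL.ne (hinterp j)
  have hlin : ∑ j, α j * (β j - 1 / t * ⟪a, g j - μ • x j⟫ + ‖a‖ ^ 2 / (2 * t))
      = ∑ j, α j * β j - ⟪a, c⟫ + ‖a‖ ^ 2 / (2 * t) := by
    simp only [c, real_inner_smul_right, inner_sum, mul_add, mul_sub, Finset.sum_add_distrib,
      Finset.sum_sub_distrib, ← Finset.sum_mul, hα.2, one_mul, Finset.mul_sum]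
    congr 2
    exact Finset.sum_congr rfl fun j _ => by ring
  have hquad : L / 2 * ‖y‖ ^ 2 + ⟪a, y⟫ + (f i - ⟪g i, x i⟫ + L / 2 * ‖x i‖ ^ 2)
      = f i + ⟪g i, y - x i⟫ + L / 2 * ‖y - x i‖ ^ 2 := by
    simp only [a, norm_sub_sq_real, inner_sub_left, inner_sub_right, real_inner_smul_left]
    simp only [real_inner_comm (x i) y]
    ring
  have hvT : vT L μ x g f y α = L / 2 * ‖y‖ ^ 2 - t / 2 * ‖y - c‖ ^ 2 + ∑ j, α j * β j := rfl
  rw [inner_sub_right] at young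
  linarith

end Extension

theorem stmt5_general {d : ℕ} {I : Type*} [Fintype I]
    {L μ : ℝ} (hL : 0 < L) (hμL : μ < L)
    (x g : I → EuclideanSpace ℝ (Fin d)) (f : I → ℝ) (i : I)
    (hinterp : ∀ j : I,
      1 / (2 * L) * ‖g i - g j‖ ^ 2
          + μ * L / (2 * (L - μ)) * ‖x i - x j - (1 / L) • (g i - g j)‖ ^ 2
        ≤ f i - f j - ⟪g j, x i - x j⟫) :
    VT L μ x g f (x i) = f i ∧
    DifferentiableAt ℝ (VT L μ x g f) (x i) ∧
    gradient (VT L μ x g f) (x i) = g i := by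
  classical
  have hvertex : Pi.single i 1 ∈ stdSimplex ℝ I := single_mem_stdSimplex ℝ i
  have hub := vT_le_of_interpolation hL.ne' hμL hinterp
  have hlo (y : EuclideanSpace ℝ (Fin d)) :
      f i + ⟪g i, y - x i⟫ + μ / 2 * ‖y - x i‖ ^ 2 ≤ VT L μ x g f y := by
    rw [← vT_single hμL.ne]
    exact le_csSup ⟨_, Set.forall_mem_image.2 fun _ => hub y⟩ (Set.mem_image_of_mem _ hvertex)
  have hhi (y : EuclideanSpace ℝ (Fin d)) :
      VT L μ x g f y ≤ f i + ⟪g i, y - x i⟫ + L / 2 * ‖y - x i‖ ^ 2 :=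
    csSup_le ⟨_, Set.mem_image_of_mem _ hvertex⟩ (Set.forall_mem_image.2 fun _ => hub y)
  obtain ⟨hval, hgrad⟩ := hasGradientAt_of_quadratic_sandwich hlo hhi
  exact ⟨hval, hgrad.differentiableAt, hgrad.gradient⟩

/-- If the strongly convex interpolation conditions hold at index `i` (with respect to
every `j`), then `V_T` interpolates the data at `x_i`: `V_T(x_i) = f_i`, `V_T` is
differentiable at `x_i`, and `∇V_T(x_i) = g_i`. -/
theorem stmt5 {d : ℕ} {I : Type*} [Fintype I] [Nonempty I]
    {L μ : ℝ} (hL : 0 < L) (hμL : μ < L)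
    (x g : I → EuclideanSpace ℝ (Fin d)) (f : I → ℝ) (i : I)
    (hinterp : ∀ j : I,
      1 / (2 * L) * ‖g i - g j‖ ^ 2
          + μ * L / (2 * (L - μ)) * ‖x i - x j - (1 / L) • (g i - g j)‖ ^ 2
        ≤ f i - f j - ⟪g j, x i - x j⟫) :
    VT L μ x g f (x i) = f i ∧
    DifferentiableAt ℝ (VT L μ x g f) (x i) ∧
    gradient (VT L μ x g f) (x i) = g i :=
  stmt5_general hL hμL x g f i hinterp
end

section
/- Suppose 0 < μ < L and: (i) x_0 = 0 and g_* = 0; (ii) for every j ∈ I*_N, (1/(2L))‖g_j‖² + (μL/(2(L−μ)))‖x_* − x_j + (1/L)g_j‖² ≤ f_* − f_j − ⟨g_j, x_* − x_j⟩; (iii) ⟨x_N − x_*, g_i − μ x_i⟩ = 0 for all 0 ≤ i ≤ N−1; and (iv) ⟨x_N − x_*, x_N⟩ = 0. Then x_* is the unique global minimizer of V_𝒯, and for every y ∈ span{g_0 − μ x_0, …, g_{N−1} − μ x_{N−1}} one has ‖y − x_*‖ ≥ ‖x_N − x_*‖. -/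
/-!
With `h_i = g_i - μ x_i`, for `α` in the simplex
`v(y, α) = ∑ α_i m_i(y) - ‖μ y + ∑ α_i h_i‖² / (2(L - μ))`, where `m_i` is the quadratic lower
model of (ii). At `y = x_*` every `m_i ≤ f_*`, so `V(x_*) ≤ f_*`; at the vertex `α = e_*`, since
`g_* = 0`, `v(y, e_*) = f_* + μ/2 ‖y - x_*‖²`. So `V` grows quadratically away from `x_*`, which
is therefore its unique minimizer. The last claim is Pythagoras: by (iii) and (iv), `x_N - x_*` is
orthogonal to `y - x_N` for every `y` in the span.
-/

open scoped RealInnerProductSpace BigOperators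

section LowerModel

variable {E : Type*} [NormedAddCommGroup E] [InnerProductSpace ℝ E]

/-- The lower bound on `f(y)` that the interpolation condition for `L`-smooth, `μ`-strongly
convex functions gives at the data point `(x_j, g_j, f_j)`. -/
noncomputable def lowerModel (L μ : ℝ) (xj gj : E) (fj : ℝ) (y : E) : ℝ :=
  fj + ⟪gj, y - xj⟫ + 1 / (2 * L) * ‖gj‖ ^ 2 + μ * L / (2 * (L - μ)) * ‖y - xj + (1 / L) • gj‖ ^ 2

variable {L μ : ℝ}

lemma quadratic_part_eq (hLμ : L - μ ≠ 0) (y S : E) :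
    L / 2 * ‖y‖ ^ 2 - (L - μ) / 2 * ‖y - (1 / (L - μ)) • S‖ ^ 2
      = μ * L / (2 * (L - μ)) * ‖y‖ ^ 2 + L / (L - μ) * ⟪y, S⟫
        - 1 / (2 * (L - μ)) * ‖μ • y + S‖ ^ 2 := by
  rw [norm_sub_sq_real, norm_add_sq_real, real_inner_smul_right, real_inner_smul_left,
    norm_smul, norm_smul]
  simp only [mul_pow, Real.norm_eq_abs, sq_abs]
  field_simp
  ring

lemma lowerModel_eq (hL : L ≠ 0) (hLμ : L - μ ≠ 0) (xj gj : E) (fj : ℝ) (y : E) :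
    lowerModel L μ xj gj fj y
      = fj + 1 / (2 * (L - μ)) * ‖gj - L • xj‖ ^ 2 - L / 2 * ‖xj‖ ^ 2
        + μ * L / (2 * (L - μ)) * ‖y‖ ^ 2 + L / (L - μ) * ⟪y, gj - μ • xj⟫ := by
  simp only [lowerModel, norm_sub_sq_real, norm_add_sq_real, inner_sub_left, inner_sub_right,
    real_inner_smul_right, norm_smul, mul_pow, Real.norm_eq_abs, sq_abs]
  rw [real_inner_comm gj y, real_inner_comm gj xj]
  field_simp
  ring

end LowerModel

section Extension

variable {d : ℕ} {I : Type*} [Fintype I] {L μ : ℝ}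
  {x g : I → EuclideanSpace ℝ (Fin d)} {f : I → ℝ}

lemma vT_eq_sum_lowerModel_sub (hL : L ≠ 0) (hLμ : L - μ ≠ 0) (y : EuclideanSpace ℝ (Fin d))
    {α : I → ℝ} (hα : ∑ i, α i = 1) :
    vT L μ x g f y α
      = ∑ i, α i * lowerModel L μ (x i) (g i) (f i) y
        - 1 / (2 * (L - μ)) * ‖μ • y + ∑ i, α i • (g i - μ • x i)‖ ^ 2 := by
  simp only [vT, quadratic_part_eq hLμ, lowerModel_eq hL hLμ, inner_sum, real_inner_smul_right,
    mul_add, Finset.sum_add_distrib, ← Finset.sum_mul, hα, Finset.mul_sum]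
  ring_nf

lemma vT_le_of_lowerModel_le (hL : L ≠ 0) (hμL : μ < L) {z : EuclideanSpace ℝ (Fin d)} {b : ℝ}
    (h : ∀ i, lowerModel L μ (x i) (g i) (f i) z ≤ b) {α : I → ℝ} (hα : α ∈ stdSimplex ℝ I) :
    vT L μ x g f z α ≤ b := by
  have hLμ : 0 < L - μ := sub_pos.2 hμL
  rw [vT_eq_sum_lowerModel_sub hL hLμ.ne' z hα.2]
  calc _ ≤ ∑ i, α i * lowerModel L μ (x i) (g i) (f i) z :=
        sub_le_self _ (by positivity)
    _ ≤ ∑ i, α i * b := Finset.sum_le_sum fun i _ => mul_le_mul_of_nonneg_left (h i) (hα.1 i)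
    _ = b := by rw [← Finset.sum_mul, hα.2, one_mul]

lemma vT_single_of_grad_eq_zero [DecidableEq I] (hL : L ≠ 0) (hLμ : L - μ ≠ 0) {s : I}
    (hs : g s = 0) (y : EuclideanSpace ℝ (Fin d)) :
    vT L μ x g f y (Pi.single s 1) = f s + μ / 2 * ‖y - x s‖ ^ 2 := by
  have hnorm : ‖μ • y + (g s - μ • x s)‖ ^ 2 = μ ^ 2 * ‖y - x s‖ ^ 2 := by
    rw [hs, zero_sub, ← sub_eq_add_neg, ← smul_sub, norm_smul, mul_pow, Real.norm_eq_abs, sq_abs]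
  rw [vT_eq_sum_lowerModel_sub hL hLμ y (by simp)]
  simp only [Pi.single_apply, ite_mul, ite_smul, one_mul, one_smul, zero_mul, zero_smul,
    Finset.sum_ite_eq', Finset.mem_univ, if_true]
  rw [hnorm]
  simp only [lowerModel, hs, inner_zero_left, norm_zero, smul_zero, add_zero]
  field_simp
  ring

lemma bddAbove_vT_image (y : EuclideanSpace ℝ (Fin d)) :
    BddAbove (vT L μ x g f y '' stdSimplex ℝ I) :=
  (isCompact_stdSimplex ℝ I).bddAbove_image (by unfold vT; fun_prop)

lemma vT_le_VT {α : I → ℝ} (hα : α ∈ stdSimplex ℝ I) (y : EuclideanSpace ℝ (Fin d)) :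
    vT L μ x g f y α ≤ VT L μ x g f y :=
  le_csSup (bddAbove_vT_image y) (Set.mem_image_of_mem _ hα)

lemma VT_le_of_lowerModel_le [Nonempty I] (hL : L ≠ 0) (hμL : μ < L)
    {z : EuclideanSpace ℝ (Fin d)} {b : ℝ} (h : ∀ i, lowerModel L μ (x i) (g i) (f i) z ≤ b) :
    VT L μ x g f z ≤ b := by
  classical
  exact csSup_le ⟨_, Set.mem_image_of_mem _ (single_mem_stdSimplex ℝ (Classical.arbitrary I))⟩
    (Set.forall_mem_image.2 fun _ hα => vT_le_of_lowerModel_le hL hμL h hα)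

lemma add_sq_le_VT_of_grad_eq_zero (hL : L ≠ 0) (hLμ : L - μ ≠ 0) {s : I} (hs : g s = 0)
    (y : EuclideanSpace ℝ (Fin d)) :
    f s + μ / 2 * ‖y - x s‖ ^ 2 ≤ VT L μ x g f y := by
  classical
  rw [← vT_single_of_grad_eq_zero hL hLμ hs]
  exact vT_le_VT (single_mem_stdSimplex ℝ s) y

end Extension

lemma forall_le_and_eq_of_add_sq_le {E : Type*} [NormedAddCommGroup E] {F : E → ℝ} {z : E}
    {a μ : ℝ} (hμ : 0 < μ) (hz : F z ≤ a) (hF : ∀ y, a + μ / 2 * ‖y - z‖ ^ 2 ≤ F y) :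
    (∀ y, F z ≤ F y) ∧ ∀ y, (∀ w, F y ≤ F w) → y = z := by
  refine ⟨fun y => hz.trans (le_of_add_le_of_nonneg_left (hF y) (by positivity)), fun y hy => ?_⟩
  have hsq : μ / 2 * ‖y - z‖ ^ 2 ≤ 0 := by linarith [hF y, hy z]
  have : ‖y - z‖ ^ 2 = 0 :=
    le_antisymm (nonpos_of_mul_nonpos_right hsq (by positivity)) (by positivity)
  simpa [sub_eq_zero] using this

lemma norm_sub_le_norm_sub_of_inner_eq_zero {E : Type*} [NormedAddCommGroup E]
    [InnerProductSpace ℝ E] {p z y : E} (hy : ⟪p - z, y⟫ = 0) (hp : ⟪p - z, p⟫ = 0) :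
    ‖p - z‖ ≤ ‖y - z‖ := by
  have horth : ⟪y - p, p - z⟫ = 0 := by rw [real_inner_comm, inner_sub_right, hy, hp, sub_zero]
  have hpyth := norm_add_sq_eq_norm_sq_add_norm_sq_real horth
  rw [sub_add_sub_cancel] at hpyth
  exact mul_self_le_mul_self_iff (norm_nonneg _) (norm_nonneg _) |>.2 <|
    hpyth ▸ le_add_of_nonneg_left (mul_self_nonneg _)

/-- `I*_N` is modelled as `Option (Fin (N + 1))`: `none` is `*` and `Fin.last N` is `N`. -/
theorem stmt10_general {d N : ℕ} {L μ : ℝ} (hL : 0 < L) (hμ : 0 < μ) (hμL : μ < L)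
    (x g : Option (Fin (N + 1)) → EuclideanSpace ℝ (Fin d)) (f : Option (Fin (N + 1)) → ℝ)
    (hgstar : g none = 0)
    (hinterp : ∀ j : Option (Fin (N + 1)),
      1 / (2 * L) * ‖g j‖ ^ 2 + μ * L / (2 * (L - μ)) * ‖x none - x j + (1 / L) • g j‖ ^ 2
        ≤ f none - f j - ⟪g j, x none - x j⟫)
    (horth : ∀ i : Fin (N + 1), (i : ℕ) < N →
      ⟪x (some (Fin.last N)) - x none, g (some i) - μ • x (some i)⟫ = 0)
    (horthx : ⟪x (some (Fin.last N)) - x none, x (some (Fin.last N))⟫ = 0) :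
    (∀ y, VT L μ x g f (x none) ≤ VT L μ x g f y) ∧
    (∀ y, (∀ z, VT L μ x g f y ≤ VT L μ x g f z) → y = x none) ∧
    ∀ y ∈ Submodule.span ℝ
        ((fun i : Fin (N + 1) => g (some i) - μ • x (some i)) ''
          {i : Fin (N + 1) | (i : ℕ) < N}),
      ‖x (some (Fin.last N)) - x none‖ ≤ ‖y - x none‖ := by
  have hmodel : ∀ j, lowerModel L μ (x j) (g j) (f j) (x none) ≤ f none := fun j => by
    have := hinterp j
    unfold lowerModel
    linarith
  obtain ⟨hmin, hunique⟩ := forall_le_and_eq_of_add_sq_le hμ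
    (VT_le_of_lowerModel_le hL.ne' hμL hmodel)
    (add_sq_le_VT_of_grad_eq_zero hL.ne' (sub_pos.2 hμL).ne' hgstar)
  refine ⟨hmin, hunique, fun y hy => norm_sub_le_norm_sub_of_inner_eq_zero ?_ horthx⟩
  have hspan : Submodule.span ℝ ((fun i : Fin (N + 1) => g (some i) - μ • x (some i)) ''
      {i : Fin (N + 1) | (i : ℕ) < N}) ≤ (ℝ ∙ (x (some (Fin.last N)) - x none))ᗮ :=
    Submodule.span_le.2 <| Set.image_subset_iff.2 fun i hi =>
      Submodule.mem_orthogonal_singleton_iff_inner_right.2 (horth i hi)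
  exact Submodule.mem_orthogonal_singleton_iff_inner_right.1 (hspan hy)

/-- With index set `I*_N = {0, …, N, *}` (modelled as `Option (Fin (N+1))`, where `none`
plays the role of `*` and `Fin.last N` the role of `N`): if `0 < μ < L` and hypotheses
(i)–(iv) hold, then `x_*` is the unique global minimizer of `V_T`, and every point `y` in
the span of `{g_0 − μx_0, …, g_{N−1} − μx_{N−1}}` satisfies `‖y − x_*‖ ≥ ‖x_N − x_*‖`. -/
theorem stmt10 {d N : ℕ} (hN : 1 ≤ N) {L μ : ℝ} (hL : 0 < L) (hμ : 0 < μ) (hμL : μ < L)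
    (x g : Option (Fin (N + 1)) → EuclideanSpace ℝ (Fin d)) (f : Option (Fin (N + 1)) → ℝ)
    (hx0 : x (some 0) = 0) (hgstar : g none = 0)
    (hinterp : ∀ j : Option (Fin (N + 1)),
      1 / (2 * L) * ‖g j‖ ^ 2 + μ * L / (2 * (L - μ)) * ‖x none - x j + (1 / L) • g j‖ ^ 2
        ≤ f none - f j - ⟪g j, x none - x j⟫)
    (horth : ∀ i : Fin (N + 1), (i : ℕ) < N →
      ⟪x (some (Fin.last N)) - x none, g (some i) - μ • x (some i)⟫ = 0)
    (horthx : ⟪x (some (Fin.last N)) - x none, x (some (Fin.last N))⟫ = 0) :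
    (∀ y, VT L μ x g f (x none) ≤ VT L μ x g f y) ∧
    (∀ y, (∀ z, VT L μ x g f y ≤ VT L μ x g f z) → y = x none) ∧
    ∀ y ∈ Submodule.span ℝ
        ((fun i : Fin (N + 1) => g (some i) - μ • x (some i)) ''
          {i : Fin (N + 1) | (i : ℕ) < N}),
      ‖x (some (Fin.last N)) - x none‖ ≤ ‖y - x none‖ :=
  stmt10_general hL hμ hμL x g f hgstar hinterp horth horthx
end
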